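/- Let h : {a}* → {a,b}* be the function that changes every other letter a to b, defined by h(a^{2n}) = (ab)ⁿ and h(a^{2n+1}) = (ab)ⁿ·a. Then h is R-continuous: for every language L ⊆ {a,b}* recognized by a finite R-trivial monoid, the preimage h⁻¹(L) is recognized by a finite R-trivial monoid. -/
import Mathlib

/-- The two-letter alphabet `{a, b}`. -/
inductive AB : Type
  | a : AB
  | b : AB
deriving DecidableEq

/-- `wpow x k` is the `k`-fold concatenation `xᵏ` of the word `x`. -/
def wpow {A : Type*} (x : List A) : ℕ → List A
  | 0 => []
  | n + 1 => x ++ wpow x n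

/-- The function changing every other `a` to `b`:
`h(a^{2n}) = (ab)ⁿ` and `h(a^{2n+1}) = (ab)ⁿ·a`. -/
def hAlt (w : List Unit) : List AB :=
  wpow [AB.a, AB.b] (w.length / 2) ++ (if w.length % 2 = 1 then [AB.a] else [])

/-- A finite monoid is R-trivial if `p·M = q·M` implies `p = q`. -/
def IsRTrivial (M : Type) [Monoid M] : Prop :=
  ∀ p q : M, (Set.range fun m => p * m) = (Set.range fun m => q * m) → p = q

/-- `L` is recognized by a finite R-trivial monoid. -/
def RecogByFinRTrivialMonoid {A : Type} (L : Set (List A)) : Prop :=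
  ∃ (M : Type) (_ : Fintype M) (_ : Monoid M), IsRTrivial M ∧
    ∃ (φ : FreeMonoid A →* M) (S : Set M),
      L = {w : List A | φ (FreeMonoid.ofList w) ∈ S}

/-- Threshold monoid: `{0, …, N}` with saturating addition. -/
@[ext]
structure Thr (N : ℕ) where
  val : ℕ
  le : val ≤ N
deriving DecidableEq

instance (N : ℕ) : Mul (Thr N) :=
  ⟨fun x y => ⟨min (x.val + y.val) N, min_le_right _ _⟩⟩

instance (N : ℕ) : One (Thr N) := ⟨⟨0, Nat.zero_le N⟩⟩

lemma Thr.val_mul {N : ℕ} (x y : Thr N) : (x * y).val = min (x.val + y.val) N := rfl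

lemma Thr.val_one {N : ℕ} : (1 : Thr N).val = 0 := rfl

instance (N : ℕ) : Monoid (Thr N) where
  mul_assoc x y z := by ext; simp only [Thr.val_mul]; omega
  one_mul x := by ext; have := x.le; simp only [Thr.val_mul, Thr.val_one]; omega
  mul_one x := by ext; have := x.le; simp only [Thr.val_mul, Thr.val_one]; omega

noncomputable instance (N : ℕ) : Fintype (Thr N) :=
  Fintype.ofInjective (fun x => (⟨x.val, Nat.lt_succ_of_le x.le⟩ : Fin (N + 1)))
    (fun x y h => by ext; exact congrArg Fin.val h)

lemma Thr.rtrivial (N : ℕ) : IsRTrivial (Thr N) := by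
  intro p q h
  have h1 : p ∈ Set.range fun m => q * m := by
    rw [← h]; exact ⟨1, mul_one p⟩
  have h2 : q ∈ Set.range fun m => p * m := by
    rw [h]; exact ⟨1, mul_one q⟩
  obtain ⟨x, hx⟩ := h1
  obtain ⟨y, hy⟩ := h2
  have hx' := congrArg Thr.val hx
  have hy' := congrArg Thr.val hy
  rw [Thr.val_mul] at hx' hy'
  have := p.le; have := q.le
  ext; omega

/-- `hAlt` is R-continuous. -/
theorem hAlt_r_continuous (L : Set (List AB)) (hL : RecogByFinRTrivialMonoid L) :
    RecogByFinRTrivialMonoid (hAlt ⁻¹' L) := by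
  obtain ⟨M, fM, mM, hR, φ, S, hLS⟩ := hL
  set a₀ := φ (FreeMonoid.of AB.a) with ha₀
  set b₀ := φ (FreeMonoid.of AB.b) with hb₀
  set m := a₀ * b₀ with hm
  -- powers of the word [a,b]
  have hpow : ∀ k, φ (FreeMonoid.ofList (wpow [AB.a, AB.b] k)) = m ^ k := by
    intro k
    induction k with
    | zero => simp [wpow, FreeMonoid.ofList_nil]
    | succ n ih =>
      rw [wpow, FreeMonoid.ofList_append, map_mul, ih, pow_succ']
      congr 1
      show φ (FreeMonoid.of AB.a * FreeMonoid.ofList [AB.b]) = m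
      rw [map_mul, hm, ha₀, hb₀, FreeMonoid.ofList_singleton]
  -- powers of m stabilize
  have key : ∀ c d : ℕ, c < d → m ^ c = m ^ d → m ^ (c + 1) = m ^ c := by
    intro c d hlt hcd
    apply hR
    ext x
    constructor
    · rintro ⟨y, rfl⟩
      refine ⟨m * y, ?_⟩
      show m ^ c * (m * y) = m ^ (c + 1) * y
      rw [← mul_assoc, ← pow_succ]
    · rintro ⟨y, rfl⟩
      refine ⟨m ^ (d - c - 1) * y, ?_⟩
      show m ^ (c + 1) * (m ^ (d - c - 1) * y) = m ^ c * y
      rw [← mul_assoc, ← pow_add, show c + 1 + (d - c - 1) = d from by omega, ← hcd]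
  have hstab : ∃ i, m ^ (i + 1) = m ^ i := by
    obtain ⟨c, d, hne, hcd⟩ := Finite.exists_ne_map_eq_of_infinite (fun n : ℕ => m ^ n)
    rcases Nat.lt_or_ge c d with hlt | hge
    · exact ⟨c, key c d hlt hcd⟩
    · exact ⟨d, key d c (lt_of_le_of_ne hge (fun h => hne h.symm)) hcd.symm⟩
  obtain ⟨i, hi⟩ := hstab
  have hconst : ∀ n, i ≤ n → m ^ n = m ^ i := by
    intro n hn
    induction n with
    | zero => rw [show i = 0 from by omega]
    | succ k ih =>
      rcases Nat.lt_or_ge k i with h | h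
      · have : i = k + 1 := by omega
        rw [this]
      · rw [pow_succ, ih h, ← pow_succ, hi]
  -- m^i * a₀ = m^i
  have hia : m ^ i * a₀ = m ^ i := by
    apply hR
    ext x
    constructor
    · rintro ⟨y, rfl⟩
      refine ⟨a₀ * y, ?_⟩
      show m ^ i * (a₀ * y) = m ^ i * a₀ * y
      rw [mul_assoc]
    · rintro ⟨y, rfl⟩
      refine ⟨b₀ * y, ?_⟩
      show m ^ i * a₀ * (b₀ * y) = m ^ i * y
      rw [mul_assoc, ← mul_assoc a₀, ← hm, ← mul_assoc, ← pow_succ, hi]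
  -- the value of φ on hAlt of a word of length n
  set g : ℕ → M := fun n => m ^ (n / 2) * (if n % 2 = 1 then a₀ else 1) with hg
  have hval : ∀ w : List Unit, φ (FreeMonoid.ofList (hAlt w)) = g w.length := by
    intro w
    rw [hAlt, FreeMonoid.ofList_append, map_mul, hpow, hg]
    congr 1
    split
    · rw [FreeMonoid.ofList_singleton]
    · rw [FreeMonoid.ofList_nil, map_one]
  -- g is eventually constant beyond 2*i
  have hgc : ∀ n, 2 * i ≤ n → g n = m ^ i := by
    intro n hn
    rw [hg]
    simp only
    have h2 : i ≤ n / 2 := by omega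
    rw [hconst _ h2]
    split
    · exact hia
    · exact mul_one _
  -- the homomorphism into the threshold monoid
  set ψ : FreeMonoid Unit →* Thr (2 * i) :=
    FreeMonoid.lift (fun _ => (⟨min 1 (2 * i), min_le_right _ _⟩ : Thr (2 * i))) with hψ
  have hψval : ∀ w : List Unit, (ψ (FreeMonoid.ofList w)).val = min w.length (2 * i) := by
    intro w
    induction w with
    | nil => rw [FreeMonoid.ofList_nil, map_one]; simp [Thr.val_one]
    | cons u t ih =>
      rw [FreeMonoid.ofList_cons, map_mul, Thr.val_mul, ih]
      have : (ψ (FreeMonoid.of u)).val = min 1 (2 * i) := by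
        rw [hψ, FreeMonoid.lift_eval_of]
      rw [this]
      simp only [List.length_cons]
      omega
  refine ⟨Thr (2 * i), inferInstance, inferInstance, Thr.rtrivial _,
    ψ, {x : Thr (2 * i) | g x.val ∈ S}, ?_⟩
  ext w
  simp only [Set.mem_preimage, Set.mem_setOf_eq]
  rw [hLS]
  simp only [Set.mem_setOf_eq]
  rw [hval, hψval]
  rcases Nat.lt_or_ge w.length (2 * i) with h | h
  · rw [min_eq_left (le_of_lt h)]
  · rw [min_eq_right h, hgc _ h, hgc _ le_rfl]
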